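/- If a weakly realizable signed pattern contains consecutive entries with skip sizes a, x₁, x₂, …, x_k, b (with any signs) where a and b are even and every xᵢ is odd, then k is even; that is, odd skips occur in blocks of even size between even skips. -/

import Mathlib

/-!
The term just before an even skip is a multiple of that skip, hence even. So the terms before the
skips `a` and `b` are both even, and so is their difference `εa a + ∑ εᵢ xᵢ`; as `εa a` is even and
every `εᵢ xᵢ` is odd, the number `k` of odd summands is even.
-/

/-- A signed pattern is a list of pairs `(ε, a)` with `ε ∈ {1, -1}` and `a` a positive skip size. -/
def IsSignedPattern (p : List (ℤ × ℕ)) : Prop :=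
  ∀ e ∈ p, (e.1 = 1 ∨ e.1 = -1) ∧ 0 < e.2

/-- The (signed) sum of the steps of a pattern. -/
def stepSum (p : List (ℤ × ℕ)) : ℤ :=
  (p.map (fun e => e.1 * (e.2 : ℤ))).sum

/-- The `i`-th term of the pattern started at `T`: `T_i = T + ε₁a₁ + ⋯ + εᵢaᵢ`. -/
def patTerm (T : ℤ) (p : List (ℤ × ℕ)) (i : ℕ) : ℤ :=
  T + stepSum (p.take i)

/-- The pattern `p` is weakly realized starting from `T`: `T` is a nonnegative integer, all terms
are nonnegative, and the left term of each step is an even multiple of its skip size when the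
sign is `+1`, and an odd multiple when the sign is `-1`. -/
def WeaklyRealizableFrom (T : ℤ) (p : List (ℤ × ℕ)) : Prop :=
  0 ≤ T ∧ (∀ i, i ≤ p.length → 0 ≤ patTerm T p i) ∧
    ∀ (i : ℕ) (h : i < p.length),
      ((p.get ⟨i, h⟩).1 = 1 → ∃ k : ℤ, patTerm T p i = 2 * k * ((p.get ⟨i, h⟩).2 : ℤ)) ∧
      ((p.get ⟨i, h⟩).1 = -1 → ∃ k : ℤ, patTerm T p i = (2 * k + 1) * ((p.get ⟨i, h⟩).2 : ℤ))

/-- A pattern is weakly realizable if it is weakly realized from some starting point. -/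
def WeaklyRealizable (p : List (ℤ × ℕ)) : Prop :=
  ∃ T : ℤ, WeaklyRealizableFrom T p

/-- A pattern is realizable if it is weakly realized from some starting point in such a way that
all of its terms `T₀, …, Tₙ` are pairwise distinct. -/
def Realizable (p : List (ℤ × ℕ)) : Prop :=
  ∃ T : ℤ, WeaklyRealizableFrom T p ∧
    ∀ i j : ℕ, i ≤ p.length → j ≤ p.length → i ≠ j → patTerm T p i ≠ patTerm T p j

@[simp]
lemma stepSum_nil : stepSum [] = 0 := rfl

@[simp]
lemma stepSum_cons (e : ℤ × ℕ) (p : List (ℤ × ℕ)) :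
    stepSum (e :: p) = e.1 * (e.2 : ℤ) + stepSum p := by
  simp [stepSum]

@[simp]
lemma stepSum_append (l r : List (ℤ × ℕ)) : stepSum (l ++ r) = stepSum l + stepSum r := by
  simp [stepSum]

lemma patTerm_length_append (T : ℤ) (l r : List (ℤ × ℕ)) :
    patTerm T (l ++ r) l.length = T + stepSum l := by
  rw [patTerm, List.take_left]

lemma even_stepSum_iff_even_length {p : List (ℤ × ℕ)} (hp : ∀ e ∈ p, Odd (e.1 * (e.2 : ℤ))) :
    Even (stepSum p) ↔ Even p.length := by
  induction p with
  | nil => simp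
  | cons e p ih =>
    have he : ¬Even (e.1 * (e.2 : ℤ)) := Int.not_even_iff_odd.mpr (hp e List.mem_cons_self)
    rw [stepSum_cons, Int.even_add, ih fun x hx => hp x (List.mem_cons_of_mem e hx),
      List.length_cons, Nat.even_add_one]
    simp [he]

lemma odd_sign_mul_of_odd {ε : ℤ} {x : ℕ} (hε : ε = 1 ∨ ε = -1) (hx : Odd x) :
    Odd (ε * (x : ℤ)) := by
  refine Int.odd_mul.mpr ⟨?_, by exact_mod_cast hx⟩
  rcases hε with rfl | rfl <;> simp

lemma WeaklyRealizableFrom.even_term_of_even_skip {T : ℤ} {l r : List (ℤ × ℕ)} {e : ℤ × ℕ}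
    (h : WeaklyRealizableFrom T (l ++ e :: r)) (hε : e.1 = 1 ∨ e.1 = -1) (he : Even e.2) :
    Even (T + stepSum l) := by
  obtain ⟨-, -, hstep⟩ := h
  have hlen : l.length < (l ++ e :: r).length := by simp
  have hget : (l ++ e :: r).get ⟨l.length, hlen⟩ = e := by simp
  obtain ⟨hplus, hminus⟩ := hstep l.length hlen
  rw [hget, patTerm_length_append] at hplus hminus
  have heZ : Even (e.2 : ℤ) := by exact_mod_cast he
  rcases hε with hε | hε
  · obtain ⟨k, hk⟩ := hplus hε
    exact hk ▸ heZ.mul_left _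
  · obtain ⟨k, hk⟩ := hminus hε
    exact hk ▸ heZ.mul_left _

/-- In a weakly realizable signed pattern, a block of consecutive odd skips lying between two
even skips has even size. -/
theorem odd_skips_in_even_blocks (l₁ l₂ m : List (ℤ × ℕ)) (εa εb : ℤ) (a b : ℕ)
    (ha : Even a) (hb : Even b) (hm : ∀ e ∈ m, Odd e.2)
    (hp : IsSignedPattern (l₁ ++ [(εa, a)] ++ m ++ [(εb, b)] ++ l₂))
    (h : WeaklyRealizable (l₁ ++ [(εa, a)] ++ m ++ [(εb, b)] ++ l₂)) :
    Even m.length := by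
  obtain ⟨T, hT⟩ := h
  have hsign : ∀ e ∈ l₁ ++ [(εa, a)] ++ m ++ [(εb, b)] ++ l₂, e.1 = 1 ∨ e.1 = -1 :=
    fun e he => (hp e he).1
  have hbefore_a : Even (T + stepSum l₁) :=
    WeaklyRealizableFrom.even_term_of_even_skip (r := m ++ (εb, b) :: l₂) (by simpa using hT)
      (hsign _ (by simp)) ha
  have hbefore_b : Even (T + stepSum (l₁ ++ (εa, a) :: m)) :=
    WeaklyRealizableFrom.even_term_of_even_skip (r := l₂) (by simpa using hT)
      (hsign _ (by simp)) hb
  have hgap : stepSum m = (T + stepSum (l₁ ++ (εa, a) :: m)) - (T + stepSum l₁) - εa * a := by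
    simp only [stepSum_append, stepSum_cons]
    ring
  have hm_even : Even (stepSum m) :=
    hgap ▸ (hbefore_b.sub hbefore_a).sub ((Int.even_coe_nat a).mpr ha |>.mul_left εa)
  refine (even_stepSum_iff_even_length fun e he => ?_).mp hm_even
  exact odd_sign_mul_of_odd (hsign e (by simp [he])) (hm e he)
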